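/- Let Rev(p,ρ) = p·Σ_q ρ(q) D(κ(p,q)) with D : ℝ → [0,1] nonincreasing and κ(p,q) = p − q. If a strategy (p*, ρ*) with values p* ∈ [0,U] is replaced by (p†, ρ†) where p† = p* − ε̂, the support of ρ† is obtained by replacing each q ∈ supp(ρ*) by some q† with |q − q†| ≤ ε̂ and ρ†(q†) = ρ*(q), then Rev(p*, ρ*) − Rev(p†, ρ†) ≤ ε̂. -/
import Mathlib


/-- Revenue guarantee of the quality-pooling reduction: shifting the price down by `ε̂`
and moving each posterior mean by at most `ε̂` loses at most `ε̂` in revenue, for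
additive valuation `κ(p,q) = p - q` and nonincreasing demand `D` with values in [0,1]. -/
theorem stmt_19 (U : ℝ) (hU : 0 < U) (D : ℝ → ℝ) (hD : Antitone D)
    (hDr : ∀ x, D x ∈ Set.Icc (0:ℝ) 1)
    (pstar εh : ℝ) (hp : pstar ∈ Set.Icc 0 U) (hε : 0 < εh) (hεp : εh ≤ pstar)
    (Q : Finset ℝ) (ρ : ℝ → ℝ) (hρ0 : ∀ q ∈ Q, 0 ≤ ρ q) (hρ1 : ∑ q ∈ Q, ρ q = 1)
    (qd : ℝ → ℝ) (hqd : ∀ q ∈ Q, |q - qd q| ≤ εh) :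
    pstar * ∑ q ∈ Q, ρ q * D (pstar - q)
      - (pstar - εh) * ∑ q ∈ Q, ρ q * D ((pstar - εh) - qd q) ≤ εh := by
  have hp0 : 0 ≤ pstar := hp.1
  have hsum_le : ∑ q ∈ Q, ρ q * D (pstar - q)
      ≤ ∑ q ∈ Q, ρ q * D ((pstar - εh) - qd q) := by
    apply Finset.sum_le_sum
    intro q hq
    have h1 : q - qd q ≤ εh := (abs_le.mp (hqd q hq)).2
    have h2 : (pstar - εh) - qd q ≤ pstar - q := by linarith
    exact mul_le_mul_of_nonneg_left (hD h2) (hρ0 q hq)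
  have hS0 : 0 ≤ ∑ q ∈ Q, ρ q * D ((pstar - εh) - qd q) :=
    Finset.sum_nonneg fun q hq => mul_nonneg (hρ0 q hq) (hDr _).1
  have hS1 : ∑ q ∈ Q, ρ q * D ((pstar - εh) - qd q) ≤ 1 := by
    calc ∑ q ∈ Q, ρ q * D ((pstar - εh) - qd q) ≤ ∑ q ∈ Q, ρ q := by
          apply Finset.sum_le_sum
          intro q hq
          have := (hDr ((pstar - εh) - qd q)).2
          nlinarith [hρ0 q hq]
      _ = 1 := hρ1
  nlinarith [mul_le_mul_of_nonneg_left hsum_le hp0]
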